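/- arXiv:math/0411501 — 3 statements merged into one kernel-verified Lean document; each statement's English description precedes it below -/
import Mathlib

section
/- The Euler product A(η) = ∏_p [(1 - p^{-(1+η)})(1 - 2/p + p^{-(1+η)})] / (1 - 1/p)^2 converges absolutely for all complex η with Re η > -1/2, and A(0) = 1. -/
open Real Complex

lemma multipliable_of_summable_norm_sub_one {ι : Type*} {f : ι → ℂ}
    (h : Summable fun i => ‖f i - 1‖) : Multipliable f := by
  by_cases h0 : ∃ i, f i = 0
  · obtain ⟨b, hb⟩ := h0
    refine ⟨0, ?_⟩
    refine Filter.Tendsto.congr' ?_ tendsto_const_nhds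
    refine Filter.eventually_atTop.2 ⟨{b}, fun s hs => ?_⟩
    exact (Finset.prod_eq_zero (Finset.singleton_subset_iff.mp hs) hb).symm
  · push_neg at h0
    refine Complex.multipliable_of_summable_log ?_
    have hev : ∀ᶠ i in Filter.cofinite, ‖f i - 1‖ ≤ 1/2 := by
      have := h.tendsto_cofinite_zero
      filter_upwards [this.eventually_lt_const (by norm_num : (0:ℝ) < 1/2)] with i hi
      exact hi.le
    refine Summable.of_norm_bounded_eventually (g := fun i => (3/2) * ‖f i - 1‖)
      (h.mul_left _) ?_
    filter_upwards [hev] with i hi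
    have : ‖Complex.log (1 + (f i - 1))‖ ≤ (3/2) * ‖f i - 1‖ :=
      Complex.norm_log_one_add_half_le_self hi
    simpa using this

/-- The Euler product A(η) = ∏_p (1-p^{-(1+η)})(1-2/p+p^{-(1+η)})/(1-1/p)²
converges absolutely for Re η > -1/2, and A(0) = 1. -/
theorem A_multipliable_and_A_zero_eq_one :
    (∀ η : ℂ, -(1/2 : ℝ) < η.re →
      Summable (fun p : Nat.Primes =>
        ‖(1 - ((p : ℕ) : ℂ) ^ (-(1 + η))) *
            (1 - 2 / ((p : ℕ) : ℂ) + ((p : ℕ) : ℂ) ^ (-(1 + η))) /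
            (1 - 1 / ((p : ℕ) : ℂ)) ^ 2 - 1‖) ∧
      Multipliable (fun p : Nat.Primes =>
        (1 - ((p : ℕ) : ℂ) ^ (-(1 + η))) *
            (1 - 2 / ((p : ℕ) : ℂ) + ((p : ℕ) : ℂ) ^ (-(1 + η))) /
            (1 - 1 / ((p : ℕ) : ℂ)) ^ 2)) ∧
    ∏' p : Nat.Primes,
        (1 - ((p : ℕ) : ℂ) ^ (-(1 + (0 : ℂ)))) *
            (1 - 2 / ((p : ℕ) : ℂ) + ((p : ℕ) : ℂ) ^ (-(1 + (0 : ℂ)))) /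
            (1 - 1 / ((p : ℕ) : ℂ)) ^ 2 = 1 := by
  constructor
  · intro η hη
    have hsum : Summable (fun p : Nat.Primes =>
        ‖(1 - ((p : ℕ) : ℂ) ^ (-(1 + η))) *
            (1 - 2 / ((p : ℕ) : ℂ) + ((p : ℕ) : ℂ) ^ (-(1 + η))) /
            (1 - 1 / ((p : ℕ) : ℂ)) ^ 2 - 1‖) := by
      have hB : Summable (fun p : Nat.Primes =>
          4 * (2 * ((p : ℕ) : ℝ) ^ (-(3/2) : ℝ) +
            ((p : ℕ) : ℝ) ^ (2 * (-(1 + η.re))) + ((p : ℕ) : ℝ) ^ (-(2:ℝ)))) := by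
        refine Summable.mul_left 4 ?_
        refine Summable.add (Summable.add ?_ ?_) ?_
        · exact (Nat.Primes.summable_rpow.mpr (by norm_num)).mul_left 2
        · exact Nat.Primes.summable_rpow.mpr (by nlinarith)
        · exact Nat.Primes.summable_rpow.mpr (by norm_num)
      refine hB.of_nonneg_of_le (fun _ => norm_nonneg _) (fun p => ?_)
      have hp2 : (2 : ℕ) ≤ (p : ℕ) := p.prop.two_le
      have hp2' : (2 : ℝ) ≤ ((p : ℕ) : ℝ) := by exact_mod_cast hp2
      have hp0 : (0 : ℝ) < ((p : ℕ) : ℝ) := by linarith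
      have hp1 : (1 : ℝ) ≤ ((p : ℕ) : ℝ) := by linarith
      have hc0 : ((p : ℕ) : ℂ) ≠ 0 := by
        exact_mod_cast (by positivity : ((p : ℕ) : ℝ) ≠ 0)
      set c : ℂ := ((p : ℕ) : ℂ)
      set x : ℂ := c ^ (-(1 + η))
      have hnx : ‖x‖ = ((p : ℕ) : ℝ) ^ (-(1 + η.re)) := by
        rw [show x = c ^ (-(1 + η)) from rfl,
          Complex.norm_natCast_cpow_of_pos (by omega)]
        norm_num
      -- bound on the denominator
      have hd : (1 : ℝ) / 2 ≤ ‖1 - 1 / c‖ := by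
        have h1 : ‖(1 : ℂ)‖ - ‖1/c‖ ≤ ‖1 - 1/c‖ := norm_sub_norm_le _ _
        have h2 : ‖1/c‖ = 1 / ((p : ℕ) : ℝ) := by
          rw [norm_div, norm_one, Complex.norm_natCast]
        rw [h2, norm_one] at h1
        linarith [one_div_le_one_div_of_le two_pos hp2']
      have hdne : (1 : ℂ) - 1 / c ≠ 0 := by
        intro hzero
        rw [hzero, norm_zero] at hd
        linarith
      -- numerator identity
      have hnum : (1 - x) * (1 - 2 / c + x) - (1 - 1/c)^2
          = 2 * x / c - x ^ 2 - 1 / c ^ 2 := by ring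
      have key : (1 - x) * (1 - 2 / c + x) / (1 - 1/c)^2 - 1
          = (2 * x / c - x ^ 2 - 1 / c ^ 2) / (1 - 1/c)^2 := by
        rw [div_sub_one (pow_ne_zero _ hdne), hnum]
      rw [key, norm_div]
      have hnormden : (1:ℝ)/4 ≤ ‖(1 - 1/c)^2‖ := by
        rw [norm_pow]
        nlinarith [norm_nonneg (1 - 1/c)]
      have hnormnum : ‖2 * x / c - x ^ 2 - 1 / c ^ 2‖ ≤
          2 * ((p : ℕ) : ℝ) ^ (-(3/2) : ℝ) +
            ((p : ℕ) : ℝ) ^ (2 * (-(1 + η.re))) + ((p : ℕ) : ℝ) ^ (-(2:ℝ)) := by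
        have t1 : ‖2 * x / c‖ ≤ 2 * ((p : ℕ) : ℝ) ^ (-(3/2) : ℝ) := by
          rw [norm_div, norm_mul]
          rw [Complex.norm_natCast, hnx]
          rw [show ‖(2:ℂ)‖ = 2 by simp]
          rw [div_le_iff₀ hp0]
          have : ((p : ℕ) : ℝ) ^ (-(1 + η.re)) ≤ ((p : ℕ) : ℝ) ^ (-(1/2) : ℝ) :=
            Real.rpow_le_rpow_of_exponent_le hp1 (by linarith)
          calc 2 * ((p : ℕ) : ℝ) ^ (-(1 + η.re))
              ≤ 2 * ((p : ℕ) : ℝ) ^ (-(1/2) : ℝ) := by linarith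
            _ = 2 * ((p : ℕ) : ℝ) ^ (-(3/2) : ℝ) * ((p : ℕ) : ℝ) := by
                rw [mul_assoc, ← Real.rpow_add_one (by positivity)]
                norm_num
        have t2 : ‖x ^ 2‖ = ((p : ℕ) : ℝ) ^ (2 * (-(1 + η.re))) := by
          rw [norm_pow, hnx, ← Real.rpow_natCast (((p : ℕ) : ℝ) ^ (-(1 + η.re))) 2,
            ← Real.rpow_mul hp0.le]
          ring_nf
        have t3 : ‖1 / c ^ 2‖ = ((p : ℕ) : ℝ) ^ (-(2:ℝ)) := by
          rw [norm_div, norm_one, norm_pow, Complex.norm_natCast,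
            Real.rpow_neg hp0.le, Real.rpow_two, one_div, sq]
        calc ‖2 * x / c - x ^ 2 - 1 / c ^ 2‖
            ≤ ‖2 * x / c - x ^ 2‖ + ‖1 / c ^ 2‖ := norm_sub_le _ _
          _ ≤ ‖2 * x / c‖ + ‖x ^ 2‖ + ‖1 / c ^ 2‖ := by
              linarith [norm_sub_le (2 * x / c) (x ^ 2)]
          _ ≤ _ := by rw [t2, t3]; linarith
      calc ‖2 * x / c - x ^ 2 - 1 / c ^ 2‖ / ‖(1 - 1/c)^2‖
          ≤ ‖2 * x / c - x ^ 2 - 1 / c ^ 2‖ / (1/4) := by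
            apply div_le_div_of_nonneg_left (norm_nonneg _) (by norm_num) hnormden
        _ = 4 * ‖2 * x / c - x ^ 2 - 1 / c ^ 2‖ := by ring
        _ ≤ _ := by
            have := hnormnum
            linarith
    exact ⟨hsum, multipliable_of_summable_norm_sub_one hsum⟩
  · have hone : ∀ p : Nat.Primes,
        (1 - ((p : ℕ) : ℂ) ^ (-(1 + (0 : ℂ)))) *
            (1 - 2 / ((p : ℕ) : ℂ) + ((p : ℕ) : ℂ) ^ (-(1 + (0 : ℂ)))) /
            (1 - 1 / ((p : ℕ) : ℂ)) ^ 2 = 1 := by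
      intro p
      have hp2 : (2 : ℕ) ≤ (p : ℕ) := p.prop.two_le
      have hc0 : ((p : ℕ) : ℂ) ≠ 0 := by
        exact_mod_cast (by positivity : ((p : ℕ) : ℝ) ≠ 0)
      have hc1 : ((p : ℕ) : ℂ) ≠ 1 := by
        intro h
        have : (p : ℕ) = 1 := by exact_mod_cast h
        omega
      have hx : ((p : ℕ) : ℂ) ^ (-(1 + (0 : ℂ))) = (((p : ℕ) : ℂ))⁻¹ := by
        rw [add_zero, Complex.cpow_neg, Complex.cpow_one]
      rw [hx]
      have hd : (1 : ℂ) - 1 / ((p : ℕ) : ℂ) ≠ 0 := by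
        rw [sub_ne_zero]
        intro h
        rw [eq_comm, div_eq_one_iff_eq hc0] at h
        exact hc1 h.symm
      rw [show (((p : ℕ) : ℂ))⁻¹ = 1 / ((p : ℕ) : ℂ) from (one_div _).symm,
        show (1 : ℂ) - 2 / ((p : ℕ) : ℂ) + 1 / ((p : ℕ) : ℂ)
          = 1 - 1 / ((p : ℕ) : ℂ) by ring, ← sq, div_self (pow_ne_zero 2 hd)]
    rw [tprod_congr hone, tprod_one]
end

section
/- Let g be an entire function with g(0) = 1, real on the real axis, satisfying |g(x+iy)| ≤ C e^{x - |y|^α} for x ≥ 0 and |g(x+iy)| ≤ C e^{x/4 - |y|^α} for x < 0, for some constants C > 0 and 0 < α < 1. Define h(v) = (1/(2πi)) ∫_{-∞}^0 [g(u - iv)/(u - iv) - g(u + iv)/(u + iv)] du for v ≠ 0 and h(0) = 0. Then there is a constant C' with |h(v)| ≤ C' e^{-|v|^α} for all real v. -/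
open Real Complex MeasureTheory Set Metric Filter Topology


lemma deriv_bd (α C : ℝ) (hα0 : 0 < α) (hC : 0 < C) (g : ℂ → ℂ) (hg : Differentiable ℂ g)
    (hbd1 : ∀ x y : ℝ, 0 ≤ x → ‖g (x + Complex.I * y)‖ ≤ C * Real.exp (x - |y| ^ α))
    (hbd2 : ∀ x y : ℝ, x < 0 → ‖g (x + Complex.I * y)‖ ≤ C * Real.exp (x / 4 - |y| ^ α)) :
    ∀ z : ℂ, z.re ≤ 0 → ‖deriv g z‖ ≤ C * Real.exp (z.re / 4 + 1) := by
  intro z hz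
  have key : ∀ w : ℂ, w ∈ Metric.sphere z 1 → ‖g w‖ ≤ C * Real.exp (z.re / 4 + 1) := by
    intro w hw
    have hdist : ‖w - z‖ = 1 := by
      rwa [Metric.mem_sphere, dist_eq_norm] at hw
    have hre : |w.re - z.re| ≤ 1 := by
      have h1 := Complex.abs_re_le_norm (w - z)
      rw [Complex.sub_re] at h1
      linarith
    have hre' := abs_le.mp hre
    have hrp : (0:ℝ) ≤ |w.im| ^ α := Real.rpow_nonneg (abs_nonneg _) _
    have hgw : g w = g (↑w.re + Complex.I * ↑w.im) := by
      rw [mul_comm, Complex.re_add_im]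
    rcases le_or_gt 0 w.re with h | h
    · calc ‖g w‖ ≤ C * Real.exp (w.re - |w.im| ^ α) := hgw ▸ hbd1 w.re w.im h
        _ ≤ C * Real.exp (z.re / 4 + 1) := by
          apply mul_le_mul_of_nonneg_left _ hC.le
          apply Real.exp_le_exp.mpr
          linarith
    · calc ‖g w‖ ≤ C * Real.exp (w.re / 4 - |w.im| ^ α) := hgw ▸ hbd2 w.re w.im h
        _ ≤ C * Real.exp (z.re / 4 + 1) := by
          apply mul_le_mul_of_nonneg_left _ hC.le
          apply Real.exp_le_exp.mpr
          linarith
  have hle := Complex.norm_deriv_le_of_forall_mem_sphere_norm_le one_pos hg.diffContOnCl key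
  simpa using hle

lemma diff_bd (α C : ℝ) (hα0 : 0 < α) (hC : 0 < C) (g : ℂ → ℂ) (hg : Differentiable ℂ g)
    (hbd1 : ∀ x y : ℝ, 0 ≤ x → ‖g (x + Complex.I * y)‖ ≤ C * Real.exp (x - |y| ^ α))
    (hbd2 : ∀ x y : ℝ, x < 0 → ‖g (x + Complex.I * y)‖ ≤ C * Real.exp (x / 4 - |y| ^ α)) :
    ∀ u v : ℝ, u ≤ 0 →
      ‖g ((u : ℂ) - Complex.I * v) - g ((u : ℂ) + Complex.I * v)‖ ≤
        C * Real.exp (u / 4 + 1) * (2 * |v|) := by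
  intro u v hu
  set s : Set ℂ := {z : ℂ | z.re ≤ u} ∩ {z : ℂ | u ≤ z.re} with hs
  have hconv : Convex ℝ s := (convex_halfSpace_re_le u).inter (convex_halfSpace_re_ge u)
  have hm1 : ((u : ℂ) - Complex.I * v) ∈ s := by
    constructor <;> simp [hs]
  have hm2 : ((u : ℂ) + Complex.I * v) ∈ s := by
    constructor <;> simp [hs]
  have hbound : ∀ x ∈ s, ‖fderiv ℂ g x‖ ≤ C * Real.exp (u / 4 + 1) := by
    intro x hx
    have hxre : x.re = u := le_antisymm hx.1 hx.2
    have hfd : fderiv ℂ g x = ContinuousLinearMap.smulRight (1 : ℂ →L[ℂ] ℂ) (deriv g x) :=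
      (hg x).hasDerivAt.hasFDerivAt.fderiv
    rw [hfd, ContinuousLinearMap.norm_smulRight_apply, norm_one, one_mul]
    have := deriv_bd α C hα0 hC g hg hbd1 hbd2 x (by rw [hxre]; exact hu)
    rwa [hxre] at this
  have key := Convex.norm_image_sub_le_of_norm_fderiv_le (fun x _ => hg x) hbound hconv hm2 hm1
  have hnd : ‖((u : ℂ) - Complex.I * v) - ((u : ℂ) + Complex.I * v)‖ = 2 * |v| := by
    have : ((u : ℂ) - Complex.I * v) - ((u : ℂ) + Complex.I * v) = ((-2 * v : ℝ) : ℂ) * Complex.I := by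
      push_cast; ring
    rw [this, norm_mul, Complex.norm_real, Complex.norm_I, mul_one, Real.norm_eq_abs, abs_mul]
    rw [abs_neg]
    norm_num
  rw [hnd] at key
  exact key

lemma key_bd (α C : ℝ) (hα0 : 0 < α) (hα1 : α < 1) (hC : 0 < C) (g : ℂ → ℂ)
    (hg : Differentiable ℂ g)
    (hbd1 : ∀ x y : ℝ, 0 ≤ x → ‖g (x + Complex.I * y)‖ ≤ C * Real.exp (x - |y| ^ α))
    (hbd2 : ∀ x y : ℝ, x < 0 → ‖g (x + Complex.I * y)‖ ≤ C * Real.exp (x / 4 - |y| ^ α)) :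
    ∀ u v : ℝ, u < 0 → v ≠ 0 →
      ‖g ((u : ℂ) - Complex.I * v) / ((u : ℂ) - Complex.I * v) -
        g ((u : ℂ) + Complex.I * v) / ((u : ℂ) + Complex.I * v)‖ ≤
      Real.exp (-|v| ^ α) * ((C * (Real.exp 2 + 2)) * Real.exp (u / 4) +
        4 * C * (|v| / (|v| - u) ^ 2)) := by
  intro u v hu hv
  have hvpos : 0 < |v| := abs_pos.mpr hv
  set z₁ : ℂ := (u : ℂ) - Complex.I * v with hz₁def
  set z₂ : ℂ := (u : ℂ) + Complex.I * v with hz₂def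
  have him1 : z₁.im = -v := by simp [hz₁def]
  have him2 : z₂.im = v := by simp [hz₂def]
  have hz₁ : z₁ ≠ 0 := by
    intro h; apply hv
    have := congrArg Complex.im h
    rw [him1] at this; simpa using this
  have hz₂ : z₂ ≠ 0 := by
    intro h; apply hv
    have := congrArg Complex.im h
    rw [him2] at this; simpa using this
  set P : ℝ := Real.exp (u / 4) with hPdef
  set Q : ℝ := Real.exp (-|v| ^ α) with hQdef
  have hPpos : 0 < P := Real.exp_pos _
  have hQpos : 0 < Q := Real.exp_pos _
  have hP1 : P ≤ 1 := Real.exp_le_one_iff.mpr (by linarith)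
  have hPQ : Real.exp (u / 4 - |v| ^ α) = P * Q := by
    rw [hPdef, hQdef, ← Real.exp_add]; ring_nf
  have hg₂ : ‖g z₂‖ ≤ C * (P * Q) := by
    rw [← hPQ]; exact hbd2 u v hu
  have hg₁ : ‖g z₁‖ ≤ C * (P * Q) := by
    rw [← hPQ]
    have h := hbd2 u (-v) hu
    simp only [Complex.ofReal_neg, abs_neg] at h
    have heq : ((u : ℂ) + Complex.I * (-(v : ℂ))) = z₁ := by rw [hz₁def]; ring
    rwa [heq] at h
  have hRpos : 0 < (|v| - u) ^ 2 := by
    have : 0 < |v| - u := by linarith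
    positivity
  rcases le_or_gt |v| 1 with hv1 | hv1
  · -- |v| ≤ 1
    have hQ1 : 1 ≤ Real.exp 1 * Q := by
      rw [hQdef, ← Real.exp_add]
      apply Real.one_le_exp
      have : |v| ^ α ≤ 1 := Real.rpow_le_one (abs_nonneg v) hv1 hα0.le
      linarith
    have hdiffb := diff_bd α C hα0 hC g hg hbd1 hbd2 u v hu.le
    have hden_pos : (0:ℝ) < u ^ 2 + v ^ 2 := by positivity
    have hmul : z₁ * z₂ = ((u ^ 2 + v ^ 2 : ℝ) : ℂ) := by
      rw [hz₁def, hz₂def]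
      have : ((u : ℂ) - Complex.I * v) * ((u : ℂ) + Complex.I * v)
          = (u : ℂ) ^ 2 - Complex.I ^ 2 * (v : ℂ) ^ 2 := by ring
      rw [this, Complex.I_sq]; push_cast; ring
    have heq : g z₁ / z₁ - g z₂ / z₂ =
        ((u : ℂ) * (g z₁ - g z₂) + Complex.I * v * (g z₁ + g z₂)) / ((u ^ 2 + v ^ 2 : ℝ) : ℂ) := by
      rw [div_sub_div _ _ hz₁ hz₂, hmul]
      congr 1
      rw [hz₁def, hz₂def]; ring
    have hnorm_den : ‖((u ^ 2 + v ^ 2 : ℝ) : ℂ)‖ = u ^ 2 + v ^ 2 := by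
      rw [Complex.norm_real, Real.norm_eq_abs, abs_of_pos hden_pos]
    have hnum : ‖(u : ℂ) * (g z₁ - g z₂) + Complex.I * v * (g z₁ + g z₂)‖ ≤
        |u| * (C * Real.exp (u / 4 + 1) * (2 * |v|)) + |v| * (2 * (C * (P * Q))) := by
      refine (norm_add_le _ _).trans ?_
      have h1 : ‖(u : ℂ) * (g z₁ - g z₂)‖ ≤ |u| * (C * Real.exp (u / 4 + 1) * (2 * |v|)) := by
        rw [norm_mul, Complex.norm_real, Real.norm_eq_abs]
        exact mul_le_mul_of_nonneg_left hdiffb (abs_nonneg u)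
      have h2 : ‖Complex.I * v * (g z₁ + g z₂)‖ ≤ |v| * (2 * (C * (P * Q))) := by
        rw [norm_mul, norm_mul, Complex.norm_I, one_mul, Complex.norm_real, Real.norm_eq_abs]
        apply mul_le_mul_of_nonneg_left _ (abs_nonneg v)
        calc ‖g z₁ + g z₂‖ ≤ ‖g z₁‖ + ‖g z₂‖ := norm_add_le _ _
          _ ≤ 2 * (C * (P * Q)) := by linarith
      linarith
    rw [heq, norm_div, hnorm_den]
    have step1 : ‖(u : ℂ) * (g z₁ - g z₂) + Complex.I * v * (g z₁ + g z₂)‖ / (u ^ 2 + v ^ 2) ≤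
        (|u| * (C * Real.exp (u / 4 + 1) * (2 * |v|)) + |v| * (2 * (C * (P * Q)))) /
          (u ^ 2 + v ^ 2) := by
      gcongr
    refine step1.trans ?_
    rw [add_div]
    have h2uv : 2 * |u| * |v| ≤ u ^ 2 + v ^ 2 := by
      nlinarith [sq_nonneg (|u| - |v|), _root_.sq_abs u, _root_.sq_abs v]
    have hR : (|v| - u) ^ 2 ≤ 2 * (u ^ 2 + v ^ 2) := by
      nlinarith [sq_nonneg (|v| + u), _root_.sq_abs v]
    have t1 : |u| * (C * Real.exp (u / 4 + 1) * (2 * |v|)) / (u ^ 2 + v ^ 2) ≤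
        Q * ((C * (Real.exp 2 + 2)) * P) := by
      have t1a : |u| * (C * Real.exp (u / 4 + 1) * (2 * |v|)) / (u ^ 2 + v ^ 2) ≤
          C * Real.exp (u / 4 + 1) := by
        rw [div_le_iff₀ hden_pos]
        calc |u| * (C * Real.exp (u / 4 + 1) * (2 * |v|)) =
            (C * Real.exp (u / 4 + 1)) * (2 * |u| * |v|) := by ring
          _ ≤ (C * Real.exp (u / 4 + 1)) * (u ^ 2 + v ^ 2) :=
            mul_le_mul_of_nonneg_left h2uv (by positivity)
      refine t1a.trans ?_
      have he1 : Real.exp (u / 4 + 1) = P * Real.exp 1 := by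
        rw [hPdef, ← Real.exp_add]
      have he2 : Real.exp 2 = Real.exp 1 * Real.exp 1 := by
        rw [← Real.exp_add]; norm_num
      rw [he1, he2]
      calc C * (P * Real.exp 1) = (C * P * Real.exp 1) * 1 := by ring
        _ ≤ (C * P * Real.exp 1) * (Real.exp 1 * Q) :=
            mul_le_mul_of_nonneg_left hQ1 (by positivity)
        _ = Q * (C * (Real.exp 1 * Real.exp 1) * P) := by ring
        _ ≤ Q * (C * (Real.exp 1 * Real.exp 1 + 2) * P) := by
            gcongr
            linarith
    have t2 : |v| * (2 * (C * (P * Q))) / (u ^ 2 + v ^ 2) ≤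
        Q * (4 * C * (|v| / (|v| - u) ^ 2)) := by
      rw [div_le_iff₀ hden_pos]
      have hexpand : Q * (4 * C * (|v| / (|v| - u) ^ 2)) * (u ^ 2 + v ^ 2) =
          (4 * C * Q * |v| * (u ^ 2 + v ^ 2)) / (|v| - u) ^ 2 := by ring
      rw [hexpand, le_div_iff₀ hRpos]
      calc |v| * (2 * (C * (P * Q))) * (|v| - u) ^ 2
          ≤ |v| * (2 * (C * (1 * Q))) * (2 * (u ^ 2 + v ^ 2)) := by
            gcongr
        _ = 4 * C * Q * |v| * (u ^ 2 + v ^ 2) := by ring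
    have hring : Q * ((C * (Real.exp 2 + 2)) * P + 4 * C * (|v| / (|v| - u) ^ 2)) =
        Q * ((C * (Real.exp 2 + 2)) * P) + Q * (4 * C * (|v| / (|v| - u) ^ 2)) := by ring
    rw [hring]
    exact add_le_add t1 t2
  · -- |v| > 1
    have hn1 : |v| ≤ ‖z₁‖ := by
      have := Complex.abs_im_le_norm z₁
      rw [him1, abs_neg] at this; exact this
    have hn2 : |v| ≤ ‖z₂‖ := by
      have := Complex.abs_im_le_norm z₂
      rw [him2] at this; exact this
    have hb1 : ‖g z₁ / z₁‖ ≤ C * (P * Q) := by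
      rw [norm_div]
      calc ‖g z₁‖ / ‖z₁‖ ≤ (C * (P * Q)) / |v| :=
          div_le_div₀ (by positivity) hg₁ hvpos hn1
        _ ≤ C * (P * Q) := div_le_self (by positivity) (by linarith)
    have hb2 : ‖g z₂ / z₂‖ ≤ C * (P * Q) := by
      rw [norm_div]
      calc ‖g z₂‖ / ‖z₂‖ ≤ (C * (P * Q)) / |v| :=
          div_le_div₀ (by positivity) hg₂ hvpos hn2
        _ ≤ C * (P * Q) := div_le_self (by positivity) (by linarith)
    calc ‖g z₁ / z₁ - g z₂ / z₂‖ ≤ ‖g z₁ / z₁‖ + ‖g z₂ / z₂‖ := norm_sub_le _ _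
      _ ≤ 2 * (C * (P * Q)) := by linarith
      _ ≤ Q * ((C * (Real.exp 2 + 2)) * P + 4 * C * (|v| / (|v| - u) ^ 2)) := by
        have hterm : (0:ℝ) ≤ Q * (4 * C * (|v| / (|v| - u) ^ 2)) := by positivity
        have h1 : 2 * (C * (P * Q)) ≤ Q * ((C * (Real.exp 2 + 2)) * P) := by
          have : (2:ℝ) ≤ Real.exp 2 + 2 := by linarith [Real.exp_pos 2]
          calc 2 * (C * (P * Q)) = (C * P * Q) * 2 := by ring
            _ ≤ (C * P * Q) * (Real.exp 2 + 2) := by gcongr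
            _ = Q * ((C * (Real.exp 2 + 2)) * P) := by ring
        have hsplit : Q * ((C * (Real.exp 2 + 2)) * P + 4 * C * (|v| / (|v| - u) ^ 2)) =
            Q * ((C * (Real.exp 2 + 2)) * P) + Q * (4 * C * (|v| / (|v| - u) ^ 2)) := by ring
        rw [hsplit]
        linarith

lemma int_exp : IntegrableOn (fun x : ℝ => Real.exp (-x / 4)) (Ioi 0) ∧
    ∫ x in Ioi (0:ℝ), Real.exp (-x / 4) = 4 := by
  have hderiv : ∀ x ∈ Ici (0:ℝ),
      HasDerivAt (fun x : ℝ => -4 * Real.exp (-x / 4)) (Real.exp (-x / 4)) x := by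
    intro x _
    have h1 : HasDerivAt (fun x : ℝ => -x / 4) (-1 / 4) x :=
      (hasDerivAt_id x).neg.div_const 4
    have h2 := (h1.exp).const_mul (-4 : ℝ)
    exact h2.congr_deriv (by ring)
  have hpos : ∀ x ∈ Ioi (0:ℝ), 0 ≤ Real.exp (-x / 4) := fun x _ => (Real.exp_pos _).le
  have htend : Tendsto (fun x : ℝ => -4 * Real.exp (-x / 4)) atTop (𝓝 0) := by
    have h3 : Tendsto (fun x : ℝ => -x / 4) atTop atBot :=
      (tendsto_neg_atTop_atBot.comp tendsto_id).atBot_div_const (by norm_num)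
    have h4 : Tendsto (fun x : ℝ => Real.exp (-x / 4)) atTop (𝓝 0) :=
      Real.tendsto_exp_atBot.comp h3
    have := h4.const_mul (-4 : ℝ)
    simpa using this
  constructor
  · exact integrableOn_Ioi_deriv_of_nonneg' hderiv hpos htend
  · have := integral_Ioi_of_hasDerivAt_of_nonneg' hderiv hpos htend
    simpa using this

lemma int_rat (t : ℝ) (ht : 0 < t) :
    IntegrableOn (fun x : ℝ => t / (t + x) ^ 2) (Ioi 0) ∧
    ∫ x in Ioi (0:ℝ), t / (t + x) ^ 2 = 1 := by
  have hne : ∀ x : ℝ, x ∈ Ici (0:ℝ) → t + x ≠ 0 := fun x hx => by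
    have : (0:ℝ) ≤ x := hx
    positivity
  have hderiv : ∀ x ∈ Ici (0:ℝ),
      HasDerivAt (fun x : ℝ => -(t / (t + x))) (t / (t + x) ^ 2) x := by
    intro x hx
    have h1 : HasDerivAt (fun x : ℝ => t + x) 1 x := (hasDerivAt_id x).const_add t
    have h2 := (h1.inv (hne x hx)).const_mul t
    have h3 := h2.neg
    exact h3.congr_deriv (by field_simp)
  have hpos : ∀ x ∈ Ioi (0:ℝ), 0 ≤ t / (t + x) ^ 2 := by
    intro x hx
    have : (0:ℝ) < x := hx
    positivity
  have htend : Tendsto (fun x : ℝ => -(t / (t + x))) atTop (𝓝 0) := by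
    have h3 : Tendsto (fun x : ℝ => t + x) atTop atTop :=
      tendsto_atTop_add_const_left _ _ tendsto_id
    have h4 : Tendsto (fun x : ℝ => (t + x)⁻¹) atTop (𝓝 0) := h3.inv_tendsto_atTop
    have h5 := (h4.const_mul t).neg
    simpa [div_eq_mul_inv] using h5
  constructor
  · exact integrableOn_Ioi_deriv_of_nonneg' hderiv hpos htend
  · have := integral_Ioi_of_hasDerivAt_of_nonneg' hderiv hpos htend
    rw [this]
    field_simp
    ring

/-- For entire g with g(0)=1, real on ℝ, and the stated decay, the function
h(v) = (1/(2πi)) ∫_{-∞}^0 [g(u-iv)/(u-iv) - g(u+iv)/(u+iv)] du satisfies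
|h(v)| ≤ C' e^{-|v|^α}. -/
theorem h_decay (α C : ℝ) (hα0 : 0 < α) (hα1 : α < 1) (hC : 0 < C)
    (g : ℂ → ℂ) (hg : Differentiable ℂ g) (hg0 : g 0 = 1)
    (hreal : ∀ x : ℝ, (g x).im = 0)
    (hbd1 : ∀ x y : ℝ, 0 ≤ x → ‖g (x + Complex.I * y)‖ ≤ C * Real.exp (x - |y| ^ α))
    (hbd2 : ∀ x y : ℝ, x < 0 → ‖g (x + Complex.I * y)‖ ≤ C * Real.exp (x / 4 - |y| ^ α)) :
    ∃ C' : ℝ, 0 < C' ∧ ∀ v : ℝ,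
      ‖(if v = 0 then (0 : ℂ) else
        (1 / (2 * π * Complex.I)) * ∫ u in Set.Iio (0 : ℝ),
          (g ((u : ℂ) - Complex.I * v) / ((u : ℂ) - Complex.I * v) -
           g ((u : ℂ) + Complex.I * v) / ((u : ℂ) + Complex.I * v)))‖ ≤
        C' * Real.exp (-|v| ^ α) := by
  refine ⟨4 * (C * (Real.exp 2 + 2)) + 4 * C, by positivity, ?_⟩
  intro v
  by_cases hv : v = 0
  · rw [if_pos hv, norm_zero]
    positivity
  · rw [if_neg hv]
    have hvpos : 0 < |v| := abs_pos.mpr hv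
    set A : ℝ := C * (Real.exp 2 + 2) with hA
    set F : ℝ → ℂ := fun u => g ((u : ℂ) - Complex.I * v) / ((u : ℂ) - Complex.I * v) -
      g ((u : ℂ) + Complex.I * v) / ((u : ℂ) + Complex.I * v) with hF
    set φ : ℝ → ℝ := fun x => Real.exp (-|v| ^ α) *
      (A * Real.exp (-x / 4) + 4 * C * (|v| / (|v| + x) ^ 2)) with hφ
    -- rewrite the integral over Iio 0 as one over Ioi 0
    have hIio : ∫ u in Iio (0:ℝ), F u = ∫ x in Ioi (0:ℝ), F (-x) := by
      rw [show (∫ x in Ioi (0:ℝ), F (-x)) = ∫ x in Iic (-(0:ℝ)), F x from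
        integral_comp_neg_Ioi 0 F]
      norm_num
      exact setIntegral_congr_set Iio_ae_eq_Iic
    -- integrable dominating function
    have hint : IntegrableOn φ (Ioi 0) := by
      apply Integrable.const_mul
      exact ((int_exp.1.const_mul A).add ((int_rat |v| hvpos).1.const_mul (4 * C)))
    -- a.e. bound
    have hbound : ∀ᵐ x ∂(volume.restrict (Ioi (0:ℝ))), ‖F (-x)‖ ≤ φ x := by
      filter_upwards [ae_restrict_mem measurableSet_Ioi] with x hx
      have hx0 : (0:ℝ) < x := hx
      have hk := key_bd α C hα0 hα1 hC g hg hbd1 hbd2 (-x) v (by linarith) hv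
      rw [sub_neg_eq_add] at hk
      exact hk
    have hnorm : ‖∫ x in Ioi (0:ℝ), F (-x)‖ ≤ ∫ x in Ioi (0:ℝ), φ x :=
      norm_integral_le_of_norm_le hint hbound
    have hφval : ∫ x in Ioi (0:ℝ), φ x =
        Real.exp (-|v| ^ α) * (A * 4 + 4 * C * 1) := by
      rw [hφ]
      rw [MeasureTheory.integral_const_mul]
      congr 1
      rw [integral_add (int_exp.1.const_mul A) ((int_rat |v| hvpos).1.const_mul (4 * C)),
        MeasureTheory.integral_const_mul, MeasureTheory.integral_const_mul,
        int_exp.2, (int_rat |v| hvpos).2]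
    have hcnorm : ‖(1 / (2 * (π:ℂ) * Complex.I))‖ ≤ 1 := by
      rw [norm_div, norm_one, norm_mul, norm_mul, Complex.norm_I, mul_one,
        Complex.norm_real, Real.norm_eq_abs, _root_.abs_of_nonneg Real.pi_nonneg]
      have h2 : ‖(2:ℂ)‖ = 2 := by norm_num
      rw [h2, div_le_one (by positivity)]
      linarith [Real.pi_gt_three]
    calc ‖(1 / (2 * (π:ℂ) * Complex.I)) * ∫ u in Iio (0:ℝ), F u‖
        = ‖(1 / (2 * (π:ℂ) * Complex.I))‖ * ‖∫ u in Iio (0:ℝ), F u‖ := norm_mul _ _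
      _ ≤ 1 * ‖∫ u in Iio (0:ℝ), F u‖ := by
          apply mul_le_mul_of_nonneg_right hcnorm (norm_nonneg _)
      _ = ‖∫ x in Ioi (0:ℝ), F (-x)‖ := by rw [one_mul, hIio]
      _ ≤ ∫ x in Ioi (0:ℝ), φ x := hnorm
      _ = Real.exp (-|v| ^ α) * (A * 4 + 4 * C * 1) := hφval
      _ = (4 * (C * (Real.exp 2 + 2)) + 4 * C) * Real.exp (-|v| ^ α) := by rw [hA]; ring
end

section
/- Under the assumptions on g as above (entire, g(0)=1, |g(x+iy)| ≤ C e^{x-|y|^α} for x≥0 and ≤ C e^{x/4 - |y|^α} for x<0, with 0<α<1), the function h(v) = (1/(2πi)) ∫_{-∞}^0 [g(u-iv)/(u-iv) - g(u+iv)/(u+iv)] du satisfies h(v) = 1/2 + O(v) as v → 0+. -/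
open Real Complex MeasureTheory

section CauchyAux

/-- Cauchy estimate for entire functions. -/
lemma cauchy_deriv_bound_aux {f : ℂ → ℂ} (hf : Differentiable ℂ f) {z : ℂ} {r m : ℝ}
    (hr : 0 < r) (hm : ∀ w ∈ Metric.closedBall z r, ‖f w‖ ≤ m) :
    ‖deriv f z‖ ≤ m / r :=
  Complex.norm_deriv_le_of_forall_mem_sphere_norm_le hr hf.diffContOnCl
    fun w hw => hm w (Metric.sphere_subset_closedBall hw)

end CauchyAux

/-- Under the same assumptions on g, h(v) = 1/2 + O(v) as v → 0+. -/
theorem h_near_zero (α C : ℝ) (hα0 : 0 < α) (hα1 : α < 1) (hC : 0 < C)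
    (g : ℂ → ℂ) (hg : Differentiable ℂ g) (hg0 : g 0 = 1)
    (hreal : ∀ x : ℝ, (g x).im = 0)
    (hbd1 : ∀ x y : ℝ, 0 ≤ x → ‖g (x + Complex.I * y)‖ ≤ C * Real.exp (x - |y| ^ α))
    (hbd2 : ∀ x y : ℝ, x < 0 → ‖g (x + Complex.I * y)‖ ≤ C * Real.exp (x / 4 - |y| ^ α)) :
    ∃ C' δ : ℝ, 0 < δ ∧ ∀ v : ℝ, 0 < v → v < δ →
      ‖((1 / (2 * π * Complex.I)) * ∫ u in Set.Iio (0 : ℝ),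
          (g ((u : ℂ) - Complex.I * v) / ((u : ℂ) - Complex.I * v) -
           g ((u : ℂ) + Complex.I * v) / ((u : ℂ) + Complex.I * v))) - 1 / 2‖ ≤
        C' * v := by
  classical
  set φ : ℂ → ℂ := dslope g 0 with hφdef
  have hφdiff : Differentiable ℂ φ := by
    intro z
    rcases eq_or_ne z 0 with rfl | hz
    · obtain ⟨p, hp⟩ := hg.analyticAt (0:ℂ)
      exact hp.has_fpower_series_dslope_fslope.analyticAt.differentiableAt
    · exact (differentiableAt_dslope_of_ne hz).2 (hg z)
  have hkey : ∀ z : ℂ, z * φ z = g z - 1 := by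
    intro z
    have := sub_smul_dslope g 0 z
    simpa [hg0, smul_eq_mul] using this
  have harg : ∀ z : ℂ, (↑z.re + Complex.I * ↑z.im : ℂ) = z := by
    intro z; rw [mul_comm]; exact Complex.re_add_im z
  -- bounds on g
  have hgle : ∀ z : ℂ, z.re ≤ 0 → ‖g z‖ ≤ C := by
    intro z hz
    rcases lt_or_eq_of_le hz with h | h
    · calc ‖g z‖ = ‖g (↑z.re + Complex.I * ↑z.im)‖ := by rw [harg]
        _ ≤ C * Real.exp (z.re / 4 - |z.im| ^ α) := hbd2 _ _ h
        _ ≤ C * 1 := by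
            apply mul_le_mul_of_nonneg_left _ hC.le
            apply Real.exp_le_one_iff.2
            have : (0:ℝ) ≤ |z.im| ^ α := by positivity
            linarith
        _ = C := mul_one C
    · calc ‖g z‖ = ‖g (↑z.re + Complex.I * ↑z.im)‖ := by rw [harg]
        _ ≤ C * Real.exp (z.re - |z.im| ^ α) := hbd1 _ _ (le_of_eq h.symm)
        _ ≤ C * 1 := by
            apply mul_le_mul_of_nonneg_left _ hC.le
            apply Real.exp_le_one_iff.2
            have : (0:ℝ) ≤ |z.im| ^ α := by positivity
            linarith
        _ = C := mul_one C
  have hgle1 : ∀ z : ℂ, z.re ≤ 1 → ‖g z‖ ≤ C * Real.exp 1 := by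
    intro z hz
    rcases lt_or_ge z.re 0 with h | h
    · calc ‖g z‖ ≤ C := hgle z h.le
        _ ≤ C * Real.exp 1 := le_mul_of_one_le_right hC.le (by
            have := Real.one_le_exp (by norm_num : (0:ℝ) ≤ 1); linarith)
    · calc ‖g z‖ = ‖g (↑z.re + Complex.I * ↑z.im)‖ := by rw [harg]
        _ ≤ C * Real.exp (z.re - |z.im| ^ α) := hbd1 _ _ h
        _ ≤ C * Real.exp 1 := by
            apply mul_le_mul_of_nonneg_left _ hC.le
            apply Real.exp_le_exp.2
            have : (0:ℝ) ≤ |z.im| ^ α := by positivity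
            linarith
  -- bound on φ away from 0
  have hφ_of_ne : ∀ z : ℂ, z ≠ 0 → ‖φ z‖ ≤ (‖g z‖ + 1) / ‖z‖ := by
    intro z hz
    have hz0 : (0:ℝ) < ‖z‖ := norm_pos_iff.2 hz
    rw [div_eq_inv_mul, ← norm_inv]
    calc ‖φ z‖ = ‖z⁻¹ * (z * φ z)‖ := by rw [← mul_assoc, inv_mul_cancel₀ hz, one_mul]
      _ = ‖z⁻¹‖ * ‖z * φ z‖ := norm_mul _ _
      _ ≤ ‖z⁻¹‖ * (‖g z‖ + 1) := by
          apply mul_le_mul_of_nonneg_left _ (norm_nonneg _)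
          rw [hkey z]
          calc ‖g z - 1‖ ≤ ‖g z‖ + ‖(1:ℂ)‖ := norm_sub_le _ _
            _ = ‖g z‖ + 1 := by rw [norm_one]
  -- global bound for φ on the half plane re ≤ 1
  obtain ⟨M₁, hM₁⟩ := (isCompact_closedBall (0:ℂ) 2).exists_bound_of_continuousOn
      hφdiff.continuous.continuousOn
  set M₀ : ℝ := max M₁ (C * Real.exp 1 + 1) with hM₀def
  have hM₀0 : 0 ≤ M₀ := le_trans (norm_nonneg (φ 0))
      ((hM₁ 0 (by simp)).trans (le_max_left _ _))
  have hφb : ∀ z : ℂ, z.re ≤ 1 → ‖φ z‖ ≤ M₀ := by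
    intro z hz
    rcases le_or_gt ‖z‖ 2 with h | h
    · exact (hM₁ z (by simpa [Metric.mem_closedBall, dist_zero_right] using h)).trans
        (le_max_left _ _)
    · have hzne : z ≠ 0 := by
        intro h0; rw [h0] at h; simp at h; linarith
      calc ‖φ z‖ ≤ (‖g z‖ + 1) / ‖z‖ := hφ_of_ne z hzne
        _ ≤ (C * Real.exp 1 + 1) / 1 := by
            apply div_le_div₀ (by positivity) _ one_pos (by linarith)
            have := hgle1 z hz; linarith
        _ ≤ M₀ := by rw [div_one]; exact le_max_right _ _
  -- membership in closed balls controls real parts and norms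
  have hre_ball : ∀ (w x : ℂ) (r : ℝ), x ∈ Metric.closedBall w r → x.re ≤ w.re + r := by
    intro w x r hx
    have h1 : |(x - w).re| ≤ ‖x - w‖ := Complex.abs_re_le_norm _
    have h2 : ‖x - w‖ ≤ r := by
      rw [← Complex.dist_eq]; exact Metric.mem_closedBall.1 hx
    have h3 : (x - w).re = x.re - w.re := by simp [Complex.sub_re]
    have h4 : x.re - w.re ≤ |(x - w).re| := by rw [h3] at *; exact le_abs_self _
    linarith
  -- derivative bounds
  have hd1 : ∀ w : ℂ, w.re ≤ 0 → ‖deriv φ w‖ ≤ M₀ := by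
    intro w hw
    have := cauchy_deriv_bound_aux hφdiff one_pos
        (fun x hx => hφb x (by have := hre_ball w x 1 hx; linarith))
    simpa using this
  have hd2 : ∀ w : ℂ, w.re ≤ -2 → ‖deriv φ w‖ ≤ 4 * (C + 1) / w.re ^ 2 := by
    intro w hw
    have hr : (0:ℝ) < -w.re / 2 := by linarith
    have hb : ∀ x ∈ Metric.closedBall w (-w.re/2), ‖φ x‖ ≤ (C + 1) / (-w.re/2) := by
      intro x hx
      have hxre : x.re ≤ w.re / 2 := by have := hre_ball w x _ hx; linarith
      have hxn : -w.re/2 ≤ ‖x‖ := by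
        have h1 : |x.re| ≤ ‖x‖ := Complex.abs_re_le_norm x
        have h2 : -x.re ≤ |x.re| := neg_le_abs _
        have h3 : ‖x‖ = ‖x‖ := rfl
        linarith
      have hxne : x ≠ 0 := by
        intro h0; rw [h0] at hxn; simp at hxn; linarith
      calc ‖φ x‖ ≤ (‖g x‖ + 1) / ‖x‖ := hφ_of_ne x hxne
        _ ≤ (C + 1) / (-w.re/2) := by
            apply div_le_div₀ (by positivity) _ hr hxn
            have := hgle x (by linarith); linarith
    have := cauchy_deriv_bound_aux hφdiff hr hb
    calc ‖deriv φ w‖ ≤ ((C+1)/(-w.re/2))/(-w.re/2) := this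
      _ = 4*(C+1)/w.re^2 := by
          rw [div_div, div_eq_div_iff (mul_pos hr hr).ne' (by nlinarith : (0:ℝ) < w.re^2).ne']
          ring
  -- the constant
  refine ⟨max (4*M₀) (4*(C+1)), 1, one_pos, ?_⟩
  intro v hv hv1
  set K : ℝ := max (4*M₀) (4*(C+1)) with hKdef
  have hK1 : 4*M₀ ≤ K := le_max_left _ _
  have hK2 : 4*(C+1) ≤ K := le_max_right _ _
  have hK0 : 0 < K := lt_of_lt_of_le (by linarith) hK2
  set a : ℝ → ℂ := fun u => (u:ℂ) - Complex.I*v with hadef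
  set b : ℝ → ℂ := fun u => (u:ℂ) + Complex.I*v with hbdef
  have ha0 : ∀ u : ℝ, a u ≠ 0 := by
    intro u h; have := congrArg Complex.im h
    simp [hadef] at this; linarith
  have hb0 : ∀ u : ℝ, b u ≠ 0 := by
    intro u h; have := congrArg Complex.im h
    simp [hbdef] at this; linarith
  -- the segment estimate
  have hseg_re : ∀ u : ℝ, ∀ w ∈ segment ℝ (a u) (b u), w.re = u := by
    intro u w hw
    rw [segment_eq_image'] at hw
    obtain ⟨t, ht, rfl⟩ := hw
    simp [hadef, hbdef, Complex.add_re, Complex.sub_re, Complex.smul_re, Complex.mul_re]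
  have hba_norm : ∀ u : ℝ, ‖b u - a u‖ = 2*v := by
    intro u
    have h1 : b u - a u = ((2*v:ℝ):ℂ)*Complex.I := by
      simp only [hadef, hbdef]; push_cast; ring
    rw [h1]; simp [abs_of_pos hv]
  have hG : ∀ u : ℝ, u < 0 → ‖φ (a u) - φ (b u)‖ ≤ 4*K*v / (1+u^2) := by
    intro u hu
    have hconv : Convex ℝ (segment ℝ (a u) (b u)) := convex_segment _ _
    have hdiff : ∀ w ∈ segment ℝ (a u) (b u), DifferentiableAt ℂ φ w := fun w _ => hφdiff w
    have hmem_a : a u ∈ segment ℝ (a u) (b u) := left_mem_segment ℝ _ _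
    have hmem_b : b u ∈ segment ℝ (a u) (b u) := right_mem_segment ℝ _ _
    rcases le_or_gt u (-2) with h2 | h2
    · have hu2 : (4:ℝ) ≤ u^2 := by nlinarith
      have bound : ∀ w ∈ segment ℝ (a u) (b u), ‖deriv φ w‖ ≤ 4*(C+1)/u^2 := by
        intro w hw
        have hwre := hseg_re u w hw
        have := hd2 w (by rw [hwre]; exact h2)
        rwa [hwre] at this
      have hmvt := hconv.norm_image_sub_le_of_norm_deriv_le hdiff bound hmem_a hmem_b
      rw [hba_norm u] at hmvt
      have h3 : ‖φ (a u) - φ (b u)‖ = ‖φ (b u) - φ (a u)‖ := by rw [norm_sub_rev]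
      rw [h3]
      refine hmvt.trans ?_
      rw [div_mul_eq_mul_div, div_le_div_iff₀ (by positivity) (by positivity)]
      nlinarith [mul_nonneg (mul_nonneg (sub_nonneg.2 hK2) hv.le) (sq_nonneg u),
        mul_nonneg (mul_nonneg (by nlinarith : (0:ℝ) ≤ u^2 - 1) hv.le)
          (by linarith : (0:ℝ) ≤ C+1)]
    · have hu2 : u^2 ≤ 4 := by nlinarith
      have bound : ∀ w ∈ segment ℝ (a u) (b u), ‖deriv φ w‖ ≤ M₀ := by
        intro w hw
        have hwre := hseg_re u w hw
        exact hd1 w (by rw [hwre]; linarith)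
      have hmvt := hconv.norm_image_sub_le_of_norm_deriv_le hdiff bound hmem_a hmem_b
      rw [hba_norm u] at hmvt
      have h3 : ‖φ (a u) - φ (b u)‖ = ‖φ (b u) - φ (a u)‖ := by rw [norm_sub_rev]
      rw [h3]
      refine hmvt.trans ?_
      rw [div_eq_mul_inv, ← mul_assoc]
      rw [← div_eq_mul_inv, le_div_iff₀ (by positivity)]
      nlinarith [hv.le, mul_nonneg hv.le hM₀0]
  -- the dominating function is integrable
  have hψint : IntegrableOn (fun u : ℝ => 4*K*v*(1+u^2)⁻¹) (Set.Iio (0:ℝ)) :=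
    (integrable_inv_one_add_sq.const_mul (4*K*v)).integrableOn
  have hGcont : Continuous (fun u : ℝ => φ (a u) - φ (b u)) := by
    apply Continuous.sub
    · exact hφdiff.continuous.comp (Complex.continuous_ofReal.sub continuous_const)
    · exact hφdiff.continuous.comp (Complex.continuous_ofReal.add continuous_const)
  have hGbd : ∀ᵐ u ∂(volume.restrict (Set.Iio (0:ℝ))),
      ‖φ (a u) - φ (b u)‖ ≤ 4*K*v*(1+u^2)⁻¹ := by
    refine (ae_restrict_iff' measurableSet_Iio).2 (ae_of_all _ fun u hu => ?_)
    have := hG u hu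
    rwa [div_eq_mul_inv] at this
  have hGint : IntegrableOn (fun u : ℝ => φ (a u) - φ (b u)) (Set.Iio (0:ℝ)) :=
    Integrable.mono' hψint hGcont.aestronglyMeasurable hGbd
  -- the rational part is integrable
  have hreal_int : Integrable (fun u : ℝ => 2*v/(u^2+v^2)) := by
    have h1 := (integrable_inv_one_add_sq.comp_div (show v ≠ 0 by positivity)).const_mul (2/v)
    refine h1.congr (ae_of_all _ fun u => ?_)
    field_simp
    ring
  have hrint : IntegrableOn (fun u : ℝ => ((2*v/(u^2+v^2):ℝ):ℂ)*Complex.I) (Set.Iio (0:ℝ)) :=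
    ((hreal_int.ofReal (𝕜 := ℂ)).mul_const Complex.I).integrableOn
  -- pointwise identity
  have hident : ∀ u : ℝ,
      g (a u) / (a u) - g (b u) / (b u)
        = (φ (a u) - φ (b u)) + ((2*v/(u^2+v^2):ℝ):ℂ)*Complex.I := by
    intro u
    have hinv : (a u)⁻¹ - (b u)⁻¹ = ((2*v/(u^2+v^2):ℝ):ℂ)*Complex.I := by
      have hab : (a u) * (b u) = (((u:ℝ)^2+(v:ℝ)^2 : ℝ):ℂ) := by
        simp only [hadef, hbdef]
        push_cast
        linear_combination (-(v:ℂ)^2) * Complex.I_sq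
      have hsc : (((u:ℝ)^2+(v:ℝ)^2 : ℝ):ℂ) ≠ 0 := by
        exact_mod_cast (by positivity : ((u:ℝ)^2+(v:ℝ)^2 : ℝ) ≠ 0)
      rw [inv_sub_inv (ha0 u) (hb0 u), hab]
      simp only [hadef, hbdef]
      push_cast
      field_simp
      ring
    have hφa : φ (a u) = (g (a u) - 1) / (a u) := by
      rw [eq_div_iff (ha0 u), mul_comm]; exact hkey (a u)
    have hφb' : φ (b u) = (g (b u) - 1) / (b u) := by
      rw [eq_div_iff (hb0 u), mul_comm]; exact hkey (b u)
    rw [hφa, hφb', ← hinv]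
    rw [sub_div, sub_div]
    ring
  -- compute the integral of the rational part
  have hrval : (∫ u in Set.Iio (0:ℝ), ((2*v/(u^2+v^2):ℝ):ℂ)*Complex.I) = (π:ℂ)*Complex.I := by
    rw [MeasureTheory.integral_mul_const]
    have h2 : (∫ u in Set.Iio (0:ℝ), 2*v/(u^2+v^2)) = π := by
      rw [← integral_Iic_eq_integral_Iio]
      have hderiv : ∀ x ∈ Set.Iic (0:ℝ),
          HasDerivAt (fun u => 2 * Real.arctan (u/v)) (2*v/(x^2+v^2)) x := by
        intro x _
        have h1 : HasDerivAt (fun u : ℝ => u/v) (1/v) x := (hasDerivAt_id x).div_const v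
        have h2 := (Real.hasDerivAt_arctan (x/v)).comp x h1
        have h3 := h2.const_mul (2:ℝ)
        have he : 2*v/(x^2+v^2) = 2 * (1 / (1 + (x / v) ^ 2) * (1 / v)) := by
          field_simp
          ring
        rw [he]
        exact h3
      have htend : Filter.Tendsto (fun u : ℝ => 2 * Real.arctan (u/v)) Filter.atBot (nhds (-π)) := by
        have h1 : Filter.Tendsto (fun u : ℝ => u/v) Filter.atBot Filter.atBot :=
          Filter.tendsto_id.atBot_div_const hv
        have h2 := (tendsto_nhds_of_tendsto_nhdsWithin Real.tendsto_arctan_atBot).comp h1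
        have h3 := h2.const_mul (2:ℝ)
        have : 2 * (-(π/2)) = -π := by ring
        rw [this] at h3
        exact h3
      rw [integral_Iic_of_hasDerivAt_of_tendsto' hderiv hreal_int.integrableOn htend]
      simp
    rw [show (∫ u in Set.Iio (0:ℝ), ((2*v/(u^2+v^2):ℝ):ℂ)) = ((π:ℝ):ℂ) from by
      rw [← h2]; exact integral_ofReal]
  -- rewrite the main integral
  have hsplit : (∫ u in Set.Iio (0:ℝ),
      (g ((u : ℂ) - Complex.I * v) / ((u : ℂ) - Complex.I * v) -
       g ((u : ℂ) + Complex.I * v) / ((u : ℂ) + Complex.I * v)))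
      = (∫ u in Set.Iio (0:ℝ), (φ (a u) - φ (b u))) + (π:ℂ)*Complex.I := by
    rw [← hrval, ← integral_add hGint hrint]
    congr 1
    funext u
    exact hident u
  rw [hsplit]
  have hπI : (1 / (2 * (π:ℂ) * Complex.I)) * ((π:ℂ)*Complex.I) = 1/2 := by
    have hπ : ((π:ℝ):ℂ) ≠ 0 := by exact_mod_cast Real.pi_ne_zero
    field_simp
  have hfin : (1 / (2 * (π:ℂ) * Complex.I)) *
        ((∫ u in Set.Iio (0:ℝ), (φ (a u) - φ (b u))) + (π:ℂ)*Complex.I) - 1/2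
      = (1 / (2 * (π:ℂ) * Complex.I)) * (∫ u in Set.Iio (0:ℝ), (φ (a u) - φ (b u))) := by
    rw [mul_add, hπI]
    ring
  rw [hfin, norm_mul]
  have hnc : ‖(1 / (2 * (π:ℂ) * Complex.I))‖ = 1/(2*π) := by
    rw [norm_div, norm_one]
    congr 1
    simp [abs_of_pos Real.pi_pos]
  rw [hnc]
  have hIbd : ‖∫ u in Set.Iio (0:ℝ), (φ (a u) - φ (b u))‖
      ≤ ∫ u in Set.Iio (0:ℝ), 4*K*v*(1+u^2)⁻¹ :=
    norm_integral_le_of_norm_le hψint hGbd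
  have hψval : (∫ u in Set.Iio (0:ℝ), 4*K*v*(1+u^2)⁻¹) = 4*K*v*(π/2) := by
    rw [MeasureTheory.integral_const_mul, ← integral_Iic_eq_integral_Iio,
      integral_Iic_inv_one_add_sq]
    simp
  rw [hψval] at hIbd
  calc (1/(2*π)) * ‖∫ u in Set.Iio (0:ℝ), (φ (a u) - φ (b u))‖
      ≤ (1/(2*π)) * (4*K*v*(π/2)) := by
        apply mul_le_mul_of_nonneg_left hIbd
        positivity
    _ = K * v := by
        field_simp
        ring
end
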